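/- arXiv:1412.6579 — 2 statements merged into one kernel-verified Lean document; each statement's English description precedes it below -/
import Mathlib

section
/- Total-correctness soundness: for any While statement s, state predicate U and setoid trace predicate P, if ⊢{U} s {P} is derivable, then for any state σ with U σ there exists a trace τ such that (s,σ) ⇒ τ and τ satisfies P. -/
namespace WhileTrace

/-- Program variables. -/
abbrev Var := ℕ
/-- States assign integer values to variables. -/
abbrev State := Var → ℤ
/-- Arithmetic expressions, modelled by their integer value in each state. -/
abbrev Expr := State → ℤ

/-- State update `σ[x ↦ v]`. -/
def update (σ : State) (x : Var) (v : ℤ) : State := Function.update σ x v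

/-- Reading an expression as a boolean: `σ ⊨ e`. -/
def istrue (e : Expr) (σ : State) : Prop := e σ ≠ 0

/-- Traces: nonempty, possibly infinite sequences of states
(a head state together with a possibly infinite sequence of further states). -/
def Trace : Type := State × Stream'.Seq State

/-- The singleton trace `⟨σ⟩`. -/
def Trace.single (σ : State) : Trace := (σ, Stream'.Seq.nil)

/-- The cons trace `σ :: τ`. -/
def Trace.cons (σ : State) (τ : Trace) : Trace := (σ, Stream'.Seq.cons τ.1 τ.2)

/-- The first state of a trace. -/
def Trace.hd (τ : Trace) : State := τ.1

/-- Bisimilarity of traces `τ ≈ τ'`, as a greatest fixed point: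
there is a relation `R` relating the two traces that is consistent with the
coinductive rules `⟨σ⟩ ≈ ⟨σ⟩` and `σ::τ ≈ σ::τ'` whenever `τ ≈ τ'`. -/
def Bisim (τ τ' : Trace) : Prop :=
  ∃ R : Trace → Trace → Prop, R τ τ' ∧
    ∀ a b, R a b →
      (∃ σ, a = Trace.single σ ∧ b = Trace.single σ) ∨
      (∃ σ a' b', a = Trace.cons σ a' ∧ b = Trace.cons σ b' ∧ R a' b')

/-- Finiteness `τ ↓ σ` : `τ` is finite with last state `σ` (inductive). -/
inductive Converges : Trace → State → Prop
  | single (σ : State) : Converges (Trace.single σ) σ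
  | cons (σ' : State) {τ : Trace} {σ : State} :
      Converges τ σ → Converges (Trace.cons σ' τ) σ

/-- Infiniteness of a trace (coinductive, as a greatest fixed point). -/
def InfiniteT (τ : Trace) : Prop :=
  ∃ P : Trace → Prop, P τ ∧ ∀ a, P a → ∃ σ a', a = Trace.cons σ a' ∧ P a'

/-- Statements of the While language. -/
inductive Stmt : Type
  | assign (x : Var) (e : Expr)
  | skip
  | seq (s₀ s₁ : Stmt)
  | ifte (e : Expr) (st sf : Stmt)
  | whileDo (e : Expr) (st : Stmt)

/-- A pair of relations `(E, ES)` is consistent with the rules of evaluation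
and extended evaluation: every claimed evaluation is backed by one of the
coinductive rules, with premises again in `(E, ES)`. -/
def EvalConsistent (E : Stmt → State → Trace → Prop)
    (ES : Stmt → Trace → Trace → Prop) : Prop :=
  (∀ x e σ τ, E (.assign x e) σ τ →
      τ = Trace.cons σ (Trace.single (update σ x (e σ)))) ∧
  (∀ σ τ, E .skip σ τ → τ = Trace.single σ) ∧
  (∀ s₀ s₁ σ τ', E (.seq s₀ s₁) σ τ' → ∃ τ, E s₀ σ τ ∧ ES s₁ τ τ') ∧
  (∀ e st sf σ τ, E (.ifte e st sf) σ τ →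
      (istrue e σ ∧ ES st (Trace.cons σ (Trace.single σ)) τ) ∨
      (¬ istrue e σ ∧ ES sf (Trace.cons σ (Trace.single σ)) τ)) ∧
  (∀ e st σ τ', E (.whileDo e st) σ τ' →
      (istrue e σ ∧ ∃ τ, ES st (Trace.cons σ (Trace.single σ)) τ ∧
        ES (.whileDo e st) τ τ') ∨
      (¬ istrue e σ ∧ τ' = Trace.cons σ (Trace.single σ))) ∧
  (∀ s τ τ', ES s τ τ' →
      (∃ σ, τ = Trace.single σ ∧ E s σ τ') ∨
      (∃ σ τ₀ τ₀', τ = Trace.cons σ τ₀ ∧ τ' = Trace.cons σ τ₀' ∧ ES s τ₀ τ₀'))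

/-- Evaluation `(s,σ) ⇒ τ` : greatest fixed point of the mutual coinductive rules. -/
def Exec (s : Stmt) (σ : State) (τ : Trace) : Prop :=
  ∃ E ES, EvalConsistent E ES ∧ E s σ τ

/-- Extended evaluation `(s,τ) ⇒* τ'`. -/
def ExecSeq (s : Stmt) (τ τ' : Trace) : Prop :=
  ∃ E ES, EvalConsistent E ES ∧ ES s τ τ'

/-- The standard inductive state-based big-step semantics `(s,σ) ⇓ σ'`. -/
inductive BigStep : Stmt → State → State → Prop
  | assign (x : Var) (e : Expr) (σ : State) :
      BigStep (.assign x e) σ (update σ x (e σ))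
  | skip (σ : State) : BigStep .skip σ σ
  | seq {s₀ s₁ : Stmt} {σ σ' σ'' : State} :
      BigStep s₀ σ σ' → BigStep s₁ σ' σ'' → BigStep (.seq s₀ s₁) σ σ''
  | ifTrue {e : Expr} {st sf : Stmt} {σ σ' : State} :
      istrue e σ → BigStep st σ σ' → BigStep (.ifte e st sf) σ σ'
  | ifFalse {e : Expr} {st sf : Stmt} {σ σ' : State} :
      ¬ istrue e σ → BigStep sf σ σ' → BigStep (.ifte e st sf) σ σ'
  | whileTrue {e : Expr} {st : Stmt} {σ σ' σ'' : State} :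
      istrue e σ → BigStep st σ σ' → BigStep (.whileDo e st) σ' σ'' →
      BigStep (.whileDo e st) σ σ''
  | whileFalse {e : Expr} {st : Stmt} {σ : State} :
      ¬ istrue e σ → BigStep (.whileDo e st) σ σ

/-- State predicates. -/
abbrev StatePred := State → Prop
/-- Trace predicates. -/
abbrev TracePred := Trace → Prop

/-- A setoid trace predicate respects bisimilarity. -/
def IsSetoidPred (P : TracePred) : Prop := ∀ τ τ', P τ → Bisim τ τ' → P τ'

/-- The singleton predicate `[U]`. -/
def Sglt (U : StatePred) : TracePred :=
  fun τ => ∃ σ, U σ ∧ τ = Trace.single σ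

/-- The doubleton predicate `⟨U⟩`. -/
def Dup (U : StatePred) : TracePred :=
  fun τ => ∃ σ, U σ ∧ τ = Trace.cons σ (Trace.single σ)

/-- The update predicate `U[x ↦ e]`. -/
def UpdPred (U : StatePred) (x : Var) (e : Expr) : TracePred :=
  fun τ => ∃ σ, U σ ∧ τ = Trace.cons σ (Trace.single (update σ x (e σ)))

/-- `Q follows τ in τ'` (coinductive, as a greatest fixed point). -/
def Follows (Q : TracePred) (τ τ' : Trace) : Prop :=
  ∃ R : Trace → Trace → Prop, R τ τ' ∧
    ∀ a b, R a b →
      (∃ σ, a = Trace.single σ ∧ b.hd = σ ∧ Q b) ∨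
      (∃ σ a' b', a = Trace.cons σ a' ∧ b = Trace.cons σ b' ∧ R a' b')

/-- The chop `P ** Q`. -/
def Chop (P Q : TracePred) : TracePred :=
  fun τ' => ∃ τ, P τ ∧ Follows Q τ τ'

/-- The iteration `P*` (coinductive, as a greatest fixed point). -/
def Iter (P : TracePred) : TracePred := fun τ =>
  ∃ X : TracePred, X τ ∧
    ∀ a, X a → Sglt (fun _ => True) a ∨ ∃ τ₀, P τ₀ ∧ Follows X τ₀ a

/-- `Last P` : states that are the last state of some finite trace satisfying `P`. -/
def Last (P : TracePred) : StatePred := fun σ => ∃ τ, P τ ∧ Converges τ σ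

/-- The trace predicate `finite`. -/
def FiniteT : TracePred := fun τ => ∃ σ, Converges τ σ

/-- Derivability `⊢ {U} s {P}` in the trace-based Hoare logic. -/
inductive THoare : StatePred → Stmt → TracePred → Prop
  | assign (U : StatePred) (x : Var) (e : Expr) :
      THoare U (.assign x e) (UpdPred U x e)
  | skip (U : StatePred) : THoare U .skip (Sglt U)
  | seq {U V : StatePred} {s₀ s₁ : Stmt} {P Q : TracePred} :
      THoare U s₀ (Chop P (Sglt V)) → THoare V s₁ Q →
      THoare U (.seq s₀ s₁) (Chop P Q)
  | ifte {U : StatePred} {e : Expr} {st sf : Stmt} {P : TracePred} :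
      THoare (fun σ => istrue e σ ∧ U σ) st P →
      THoare (fun σ => ¬ istrue e σ ∧ U σ) sf P →
      THoare U (.ifte e st sf) (Chop (Dup U) P)
  | whileDo {U I : StatePred} {e : Expr} {st : Stmt} {P : TracePred} :
      (∀ σ, U σ → I σ) →
      THoare (fun σ => istrue e σ ∧ I σ) st (Chop P (Sglt I)) →
      THoare U (.whileDo e st)
        (Chop (Dup U)
          (Chop (Iter (Chop P (Dup I))) (Sglt (fun σ => ¬ istrue e σ))))
  | conseq {U U' : StatePred} {s : Stmt} {P P' : TracePred} :
      (∀ σ, U σ → U' σ) → THoare U' s P' → (∀ τ, P' τ → P τ) →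
      THoare U s P
  | exist {Z : Type} {U : Z → StatePred} {s : Stmt} {P : Z → TracePred} :
      (∀ z, THoare (U z) s (P z)) →
      THoare (fun σ => ∃ z, U z σ) s (fun τ => ∃ z, P z τ)

/-- Derivability `⊢p {U} s {Z}` in the state-based partial-correctness Hoare logic. -/
inductive PHoare : StatePred → Stmt → StatePred → Prop
  | assign (Z : StatePred) (x : Var) (e : Expr) :
      PHoare (fun σ => Z (update σ x (e σ))) (.assign x e) Z
  | skip (U : StatePred) : PHoare U .skip U
  | seq {U V Z : StatePred} {s₀ s₁ : Stmt} :
      PHoare U s₀ V → PHoare V s₁ Z → PHoare U (.seq s₀ s₁) Z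
  | ifte {U Z : StatePred} {e : Expr} {st sf : Stmt} :
      PHoare (fun σ => istrue e σ ∧ U σ) st Z →
      PHoare (fun σ => ¬ istrue e σ ∧ U σ) sf Z →
      PHoare U (.ifte e st sf) Z
  | whileDo {I : StatePred} {e : Expr} {st : Stmt} :
      PHoare (fun σ => istrue e σ ∧ I σ) st I →
      PHoare I (.whileDo e st) (fun σ => I σ ∧ ¬ istrue e σ)
  | exist {Z : Type} {U V : Z → StatePred} {s : Stmt} :
      (∀ z, PHoare (U z) s (V z)) →
      PHoare (fun σ => ∃ z, U z σ) s (fun σ => ∃ z, V z σ)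
  | conseq {U U' Z Z' : StatePred} {s : Stmt} :
      (∀ σ, U σ → U' σ) → PHoare U' s Z' → (∀ σ, Z' σ → Z σ) →
      PHoare U s Z

/-- Derivability `⊢t {U} s {Z}` in the state-based total-correctness Hoare
logic, with the `while-fun` rule. -/
inductive TotHoare : StatePred → Stmt → StatePred → Prop
  | assign (Z : StatePred) (x : Var) (e : Expr) :
      TotHoare (fun σ => Z (update σ x (e σ))) (.assign x e) Z
  | skip (U : StatePred) : TotHoare U .skip U
  | seq {U V Z : StatePred} {s₀ s₁ : Stmt} :
      TotHoare U s₀ V → TotHoare V s₁ Z → TotHoare U (.seq s₀ s₁) Z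
  | ifte {U Z : StatePred} {e : Expr} {st sf : Stmt} :
      TotHoare (fun σ => istrue e σ ∧ U σ) st Z →
      TotHoare (fun σ => ¬ istrue e σ ∧ U σ) sf Z →
      TotHoare U (.ifte e st sf) Z
  | whileFun {I : StatePred} {e : Expr} {st : Stmt} (t : State → ℕ) (m : ℕ) :
      (∀ n : ℕ, TotHoare (fun σ => istrue e σ ∧ I σ ∧ t σ = n) st
        (fun σ => I σ ∧ t σ < n)) →
      TotHoare (fun σ => I σ ∧ t σ = m) (.whileDo e st)
        (fun σ => I σ ∧ t σ ≤ m ∧ ¬ istrue e σ)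
  | exist {Z : Type} {U V : Z → StatePred} {s : Stmt} :
      (∀ z, TotHoare (U z) s (V z)) →
      TotHoare (fun σ => ∃ z, U z σ) s (fun σ => ∃ z, V z σ)
  | conseq {U U' Z Z' : StatePred} {s : Stmt} :
      (∀ σ, U σ → U' σ) → TotHoare U' s Z' → (∀ σ, Z' σ → Z σ) →
      TotHoare U s Z

/-!
Soundness is proved rule by rule for the semantic triple `TotallyValid U s P`. Evaluation and
`Follows` are greatest fixed points of monotone operators, so unfolding, folding and coinduction
(up to the fixed point itself) all come from Knaster–Tarski. Since traces are `Stream'.Seq`s,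
bisimilarity is equality, and `P ** [V]` holds exactly of the `P`-traces whose ends (if finite)
lie in `V`. Sequencing grafts runs of `s₁` onto the end of a run of `s₀`. For `while`, a choice
`g` of body runs is fixed and the run of the loop is built by corecursion; that it is an
evaluation is a coinduction, the iteration `(P ** ⟨I⟩)*` is witnessed by the parts of the run
that follow a successful test, and the run can only end in a state where the test fails.
-/

theorem _root_.OrderHom.le_gfp_of_le_map_sup {α : Type*} [CompleteLattice α] (f : α →o α)
    {a : α} (h : a ≤ f (a ⊔ f.gfp)) : a ≤ f.gfp :=
  le_sup_left.trans <| f.le_gfp <| sup_le h <| f.map_gfp.ge.trans <| f.mono le_sup_right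

open Stream' (Seq)

namespace Trace

@[elab_as_elim]
theorem cases {motive : Trace → Prop} (single : ∀ σ, motive (single σ))
    (cons : ∀ σ τ, motive (cons σ τ)) (τ : Trace) : motive τ := by
  obtain ⟨σ, s⟩ := τ
  cases s with
  | nil => exact single σ
  | cons a s => exact cons σ (a, s)

def next (τ : Trace) : Option Trace := τ.2.destruct

@[simp] lemma next_single (σ : State) : (single σ).next = none := Seq.destruct_nil

@[simp] lemma next_cons (σ : State) (τ : Trace) : (cons σ τ).next = some τ :=
  Seq.destruct_cons _ _

@[simp] lemma hd_single (σ : State) : (single σ).hd = σ := rfl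

@[simp] lemma hd_cons (σ : State) (τ : Trace) : (cons σ τ).hd = σ := rfl

@[simp] lemma single_ne_cons {σ σ' : State} {τ : Trace} : single σ ≠ cons σ' τ := fun h => by
  simpa using congrArg next h

@[simp] lemma cons_ne_single {σ σ' : State} {τ : Trace} : cons σ' τ ≠ single σ :=
  single_ne_cons.symm

@[simp] lemma single_inj {σ σ' : State} : single σ = single σ' ↔ σ = σ' :=
  ⟨congrArg hd, congrArg single⟩

@[simp] lemma cons_inj {σ σ' : State} {τ τ' : Trace} :
    cons σ τ = cons σ' τ' ↔ σ = σ' ∧ τ = τ' :=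
  ⟨fun h => ⟨congrArg hd h, Option.some_injective _ (by simpa using congrArg next h)⟩,
    fun ⟨h₁, h₂⟩ => h₁ ▸ h₂ ▸ rfl⟩

end Trace

open Trace

theorem Bisim.eq {τ τ' : Trace} (h : Bisim τ τ') : τ = τ' := by
  obtain ⟨R, hR, step⟩ := h
  have hd_eq : ∀ a b, R a b → a.hd = b.hd := by
    intro a b hab
    rcases step a b hab with ⟨σ, rfl, rfl⟩ | ⟨σ, _, _, rfl, rfl, _⟩ <;> rfl
  refine Prod.ext (hd_eq _ _ hR) (Seq.eq_of_bisim'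
    (fun s₁ s₂ => ∃ a b, R a b ∧ a.2 = s₁ ∧ b.2 = s₂) ⟨_, _, hR, rfl, rfl⟩ ?_)
  rintro _ _ ⟨a, b, hab, rfl, rfl⟩
  rcases step a b hab with ⟨σ, rfl, rfl⟩ | ⟨σ, a', b', rfl, rfl, h'⟩
  · exact Or.inl ⟨rfl, rfl⟩
  · exact Or.inr ⟨a'.1, a'.2, b'.2, rfl, congrArg (Seq.cons · _) (hd_eq _ _ h').symm,
      a', b', h', rfl, rfl⟩

lemma converges_iff {τ : Trace} {σ : State} :
    Converges τ σ ↔ τ = single σ ∨ ∃ σ' τ', τ = cons σ' τ' ∧ Converges τ' σ := by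
  constructor
  · rintro (_ | ⟨σ', h⟩)
    exacts [Or.inl rfl, Or.inr ⟨σ', _, rfl, h⟩]
  · rintro (rfl | ⟨σ', τ', rfl, h⟩)
    exacts [.single σ, .cons σ' h]

@[simp] lemma converges_single_iff {σ σ' : State} : Converges (single σ) σ' ↔ σ = σ' := by
  rw [converges_iff]
  simp

@[simp] lemma converges_cons_iff {σ σ' : State} {τ : Trace} :
    Converges (cons σ τ) σ' ↔ Converges τ σ' := by
  rw [converges_iff]
  simp

lemma finiteT_single (σ : State) : FiniteT (single σ) := ⟨σ, .single σ⟩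

@[simp] lemma finiteT_cons_iff {σ : State} {τ : Trace} : FiniteT (cons σ τ) ↔ FiniteT τ := by
  simp [FiniteT]

def EndsIn (V : StatePred) (τ : Trace) : Prop := ∀ σ, Converges τ σ → V σ

@[simp] lemma endsIn_single {V : StatePred} {σ : State} : EndsIn V (single σ) ↔ V σ := by
  simp [EndsIn]

@[simp] lemma endsIn_cons {V : StatePred} {σ : State} {τ : Trace} :
    EndsIn V (cons σ τ) ↔ EndsIn V τ := by
  simp [EndsIn]


section Follows

variable {Q Q' : TracePred}

def followsStep (Q : TracePred) : (Trace → Trace → Prop) →o (Trace → Trace → Prop) where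
  toFun R a b := (∃ σ, a = single σ ∧ b.hd = σ ∧ Q b) ∨
    ∃ σ a' b', a = cons σ a' ∧ b = cons σ b' ∧ R a' b'
  monotone' _ _ hR _ _ := Or.imp_right fun ⟨σ, a', b', h₁, h₂, h₃⟩ =>
    ⟨σ, a', b', h₁, h₂, hR a' b' h₃⟩

lemma follows_eq_gfp (Q : TracePred) : Follows Q = (followsStep Q).gfp := by
  funext a b
  apply propext
  constructor
  · rintro ⟨R, hR, step⟩
    exact (followsStep Q).le_gfp step a b hR
  · exact fun h => ⟨_, h, (followsStep Q).map_gfp.ge⟩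

lemma follows_iff {a b : Trace} : Follows Q a b ↔ (∃ σ, a = single σ ∧ b.hd = σ ∧ Q b) ∨
    ∃ σ a' b', a = cons σ a' ∧ b = cons σ b' ∧ Follows Q a' b' := by
  have h := congr_fun₂ (followsStep Q).map_gfp a b
  rw [← follows_eq_gfp] at h
  exact h.symm.to_iff

lemma follows_coind (R : Trace → Trace → Prop)
    (step : ∀ a b, R a b → (∃ σ, a = single σ ∧ b.hd = σ ∧ Q b) ∨
      ∃ σ a' b', a = cons σ a' ∧ b = cons σ b' ∧ (R a' b' ∨ Follows Q a' b'))
    {a b : Trace} (h : R a b) : Follows Q a b := by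
  rw [follows_eq_gfp]
  exact (followsStep Q).le_gfp_of_le_map_sup (by rwa [← follows_eq_gfp]) a b h

@[simp] lemma follows_single_iff {σ : State} {b : Trace} :
    Follows Q (single σ) b ↔ b.hd = σ ∧ Q b := by
  rw [follows_iff]
  simp [eq_comm]

@[simp] lemma follows_cons_iff {σ : State} {a b : Trace} :
    Follows Q (cons σ a) b ↔ ∃ b', b = cons σ b' ∧ Follows Q a b' := by
  rw [follows_iff]
  simp

lemma Follows.mono {a b : Trace} (h : Follows Q a b) (hQ : ∀ τ, Q τ → Q' τ) :
    Follows Q' a b := by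
  refine follows_coind (Follows Q) (fun a b hab => ?_) h
  rcases follows_iff.1 hab with ⟨σ, rfl, hd, hb⟩ | ⟨σ, a', b', rfl, rfl, h'⟩
  exacts [Or.inl ⟨σ, rfl, hd, hQ b hb⟩, Or.inr ⟨σ, a', b', rfl, rfl, Or.inl h'⟩]

lemma follows_self_of_not_finite {τ : Trace} (h : ¬ FiniteT τ) : Follows Q τ τ := by
  refine follows_coind (fun a b => a = b ∧ ¬ FiniteT a) ?_ ⟨rfl, h⟩
  rintro a _ ⟨rfl, ha⟩
  cases a using Trace.cases with
  | single σ => exact absurd (finiteT_single σ) ha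
  | cons σ a => exact Or.inr ⟨σ, a, a, rfl, rfl, Or.inl ⟨rfl, by simpa using ha⟩⟩

lemma exists_follows {τ : Trace} (h : EndsIn (fun σ => ∃ τ', τ'.hd = σ ∧ Q τ') τ) :
    ∃ τ', Follows Q τ τ' := by
  by_cases hfin : FiniteT τ
  · obtain ⟨σ, hc⟩ := hfin
    induction hc with
    | single σ =>
      obtain ⟨τ', hd, hQ⟩ := endsIn_single.1 h
      exact ⟨τ', follows_single_iff.2 ⟨hd, hQ⟩⟩
    | cons σ' _ ih =>
      obtain ⟨τ', hf⟩ := ih (endsIn_cons.1 h)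
      exact ⟨cons σ' τ', follows_cons_iff.2 ⟨τ', rfl, hf⟩⟩
  · exact ⟨τ, follows_self_of_not_finite hfin⟩

lemma Follows.sglt_eq {V : StatePred} {a b : Trace} (h : Follows (Sglt V) a b) : a = b := by
  refine Bisim.eq ⟨Follows (Sglt V), h, fun a b hab => ?_⟩
  rcases follows_iff.1 hab with ⟨σ, rfl, hd, σ', -, rfl⟩ | h'
  exacts [Or.inl ⟨σ, rfl, congrArg single hd⟩, Or.inr h']

lemma Follows.endsIn_sglt {V : StatePred} {a b : Trace} (h : Follows (Sglt V) a b) :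
    EndsIn V a := by
  intro σ hc
  induction hc generalizing b with
  | single σ =>
    obtain ⟨hd, σ', hV, rfl⟩ := follows_single_iff.1 h
    exact hd ▸ hV
  | cons σ' _ ih =>
    obtain ⟨b', rfl, h'⟩ := follows_cons_iff.1 h
    exact ih h'

lemma follows_sglt_self {V : StatePred} {τ : Trace} (h : EndsIn V τ) : Follows (Sglt V) τ τ := by
  obtain ⟨τ', hf⟩ := exists_follows (Q := Sglt V) fun σ hc => ⟨single σ, rfl, σ, h σ hc, rfl⟩
  rwa [← hf.sglt_eq] at hf

lemma chop_sglt_iff {P : TracePred} {V : StatePred} {τ : Trace} :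
    Chop P (Sglt V) τ ↔ P τ ∧ EndsIn V τ := by
  constructor
  · rintro ⟨τ', hP, hf⟩
    exact hf.sglt_eq ▸ ⟨hP, hf.endsIn_sglt⟩
  · exact fun ⟨hP, hV⟩ => ⟨τ, hP, follows_sglt_self hV⟩

lemma chop_dup_cons {U : StatePred} {P : TracePred} {σ : State} {τ : Trace} (hU : U σ)
    (hd : τ.hd = σ) (hP : P τ) : Chop (Dup U) P (cons σ τ) :=
  ⟨cons σ (single σ), ⟨σ, hU, rfl⟩, follows_cons_iff.2 ⟨τ, rfl, follows_single_iff.2 ⟨hd, hP⟩⟩⟩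

end Follows

section Exec

def execStep : ((Stmt → State → Trace → Prop) × (Stmt → Trace → Trace → Prop)) →o
    ((Stmt → State → Trace → Prop) × (Stmt → Trace → Trace → Prop)) where
  toFun R :=
    (fun s σ τ => match s with
      | .assign x e => τ = cons σ (single (update σ x (e σ)))
      | .skip => τ = single σ
      | .seq s₀ s₁ => ∃ τ₀, R.1 s₀ σ τ₀ ∧ R.2 s₁ τ₀ τ
      | .ifte e st sf => (istrue e σ ∧ R.2 st (cons σ (single σ)) τ) ∨
          (¬ istrue e σ ∧ R.2 sf (cons σ (single σ)) τ)
      | .whileDo e st => (istrue e σ ∧ ∃ τ₀, R.2 st (cons σ (single σ)) τ₀ ∧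
          R.2 (.whileDo e st) τ₀ τ) ∨ (¬ istrue e σ ∧ τ = cons σ (single σ)),
     fun s τ τ' => (∃ σ, τ = single σ ∧ R.1 s σ τ') ∨
      ∃ σ τ₀ τ₀', τ = cons σ τ₀ ∧ τ' = cons σ τ₀' ∧ R.2 s τ₀ τ₀')
  monotone' := by
    rintro ⟨E, ES⟩ ⟨E', ES'⟩ ⟨hE, hES⟩
    refine ⟨fun s σ τ => ?_, fun s τ τ' => ?_⟩
    · cases s with
      | assign | skip => exact id
      | seq => exact fun ⟨τ₀, h₀, h₁⟩ => ⟨τ₀, hE _ _ _ h₀, hES _ _ _ h₁⟩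
      | ifte => exact Or.imp (And.imp_right (hES _ _ _)) (And.imp_right (hES _ _ _))
      | whileDo => exact Or.imp_left (And.imp_right fun ⟨τ₀, h₀, h₁⟩ =>
          ⟨τ₀, hES _ _ _ h₀, hES _ _ _ h₁⟩)
    · exact Or.imp (fun ⟨σ, h₀, h₁⟩ => ⟨σ, h₀, hE _ _ _ h₁⟩)
        fun ⟨σ, τ₀, τ₀', h₀, h₁, h₂⟩ => ⟨σ, τ₀, τ₀', h₀, h₁, hES _ _ _ h₂⟩

lemma evalConsistent_iff {E : Stmt → State → Trace → Prop} {ES : Stmt → Trace → Trace → Prop} :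
    EvalConsistent E ES ↔ (E, ES) ≤ execStep (E, ES) := by
  constructor
  · rintro ⟨hasg, hskip, hseq, hif, hwhile, hES⟩
    refine ⟨fun s σ τ h => ?_, hES⟩
    cases s
    exacts [hasg _ _ _ _ h, hskip _ _ h, hseq _ _ _ _ h, hif _ _ _ _ _ h, hwhile _ _ _ _ h]
  · rintro ⟨hE, hES⟩
    exact ⟨fun _ _ _ _ h => hE _ _ _ h, fun _ _ h => hE _ _ _ h, fun _ _ _ _ h => hE _ _ _ h,
      fun _ _ _ _ _ h => hE _ _ _ h, fun _ _ _ _ h => hE _ _ _ h, hES⟩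

lemma exec_eq_gfp : (Exec, ExecSeq) = execStep.gfp := by
  apply le_antisymm
  · have hle : ∀ E ES, EvalConsistent E ES → (E, ES) ≤ execStep.gfp :=
      fun E ES h => execStep.le_gfp (evalConsistent_iff.1 h)
    exact ⟨fun s σ τ ⟨E, ES, hc, h⟩ => (hle E ES hc).1 s σ τ h,
      fun s τ τ' ⟨E, ES, hc, h⟩ => (hle E ES hc).2 s τ τ' h⟩
  · have hc : EvalConsistent execStep.gfp.1 execStep.gfp.2 :=
      evalConsistent_iff.2 execStep.map_gfp.ge
    exact ⟨fun s σ τ h => ⟨_, _, hc, h⟩, fun s τ τ' h => ⟨_, _, hc, h⟩⟩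

lemma execStep_exec : execStep (Exec, ExecSeq) = (Exec, ExecSeq) := by
  rw [exec_eq_gfp]
  exact execStep.map_gfp

lemma exec_coind (E : Stmt → State → Trace → Prop) (ES : Stmt → Trace → Trace → Prop)
    (h : (E, ES) ≤ execStep ((E, ES) ⊔ (Exec, ExecSeq))) :
    (∀ s σ τ, E s σ τ → Exec s σ τ) ∧ ∀ s τ τ', ES s τ τ' → ExecSeq s τ τ' := by
  change (E, ES) ≤ (Exec, ExecSeq)
  rw [exec_eq_gfp] at h ⊢
  exact execStep.le_gfp_of_le_map_sup h

variable {s : Stmt} {σ : State} {τ τ' : Trace}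

lemma exec_iff : Exec s σ τ ↔ (execStep (Exec, ExecSeq)).1 s σ τ := by
  rw [execStep_exec]

lemma execSeq_iff : ExecSeq s τ τ' ↔ (∃ σ, τ = single σ ∧ Exec s σ τ') ∨
    ∃ σ τ₀ τ₀', τ = cons σ τ₀ ∧ τ' = cons σ τ₀' ∧ ExecSeq s τ₀ τ₀' := by
  have h := congr_fun₂ (congrArg Prod.snd execStep_exec) s τ
  exact (congr_fun h τ').symm.to_iff

@[simp] lemma execSeq_single_iff : ExecSeq s (single σ) τ ↔ Exec s σ τ := by
  rw [execSeq_iff]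
  simp

@[simp] lemma execSeq_cons_iff :
    ExecSeq s (cons σ τ) τ' ↔ ∃ τ₀, τ' = cons σ τ₀ ∧ ExecSeq s τ τ₀ := by
  rw [execSeq_iff]
  simp

lemma exec_assign {x : Var} {e : Expr} :
    Exec (.assign x e) σ (cons σ (single (update σ x (e σ)))) :=
  exec_iff.2 rfl

lemma exec_skip : Exec .skip σ (single σ) :=
  exec_iff.2 rfl

lemma exec_seq {s₀ s₁ : Stmt} (h₀ : Exec s₀ σ τ) (h₁ : ExecSeq s₁ τ τ') :
    Exec (.seq s₀ s₁) σ τ' :=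
  exec_iff.2 ⟨τ, h₀, h₁⟩

lemma exec_ifte_of_true {e : Expr} {st sf : Stmt} (he : istrue e σ) (h : Exec st σ τ) :
    Exec (.ifte e st sf) σ (cons σ τ) :=
  exec_iff.2 (Or.inl ⟨he, execSeq_cons_iff.2 ⟨τ, rfl, execSeq_single_iff.2 h⟩⟩)

lemma exec_ifte_of_false {e : Expr} {st sf : Stmt} (he : ¬ istrue e σ) (h : Exec sf σ τ) :
    Exec (.ifte e st sf) σ (cons σ τ) :=
  exec_iff.2 (Or.inr ⟨he, execSeq_cons_iff.2 ⟨τ, rfl, execSeq_single_iff.2 h⟩⟩)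

lemma hd_eq_of_execSeq_cons (h : ExecSeq s (cons σ τ) τ') : τ'.hd = σ := by
  obtain ⟨τ₀, rfl, -⟩ := execSeq_cons_iff.1 h
  rfl

lemma Exec.hd_eq (h : Exec s σ τ) : τ.hd = σ := by
  induction s generalizing σ τ with
  | assign | skip => rw [exec_iff.1 h]; rfl
  | seq s₀ s₁ ih₀ ih₁ =>
    obtain ⟨τ₀, h₀, h₁⟩ := exec_iff.1 h
    cases τ₀ using Trace.cases with
    | single σ' => exact (ih₁ (execSeq_single_iff.1 h₁)).trans (ih₀ h₀)
    | cons σ' τ₀ => exact (hd_eq_of_execSeq_cons h₁).trans (ih₀ h₀)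
  | ifte e st sf =>
    rcases exec_iff.1 h with ⟨-, h'⟩ | ⟨-, h'⟩ <;> exact hd_eq_of_execSeq_cons h'
  | whileDo e st =>
    rcases exec_iff.1 h with ⟨-, τ₀, h₀, h₁⟩ | ⟨-, rfl⟩
    · obtain ⟨τ₁, rfl, -⟩ := execSeq_cons_iff.1 h₀
      exact hd_eq_of_execSeq_cons h₁
    · rfl

lemma execSeq_of_follows (h : Follows (fun τ' => Exec s τ'.hd τ') τ τ') : ExecSeq s τ τ' := by
  refine (exec_coind (fun _ _ _ => False)
    (fun s' τ τ' => s' = s ∧ Follows (fun τ' => Exec s τ'.hd τ') τ τ')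
    ⟨fun _ _ _ => False.elim, ?_⟩).2 s τ τ' ⟨rfl, h⟩
  rintro _ a b ⟨rfl, hab⟩
  rcases follows_iff.1 hab with ⟨σ, rfl, hd, hb⟩ | ⟨σ, a', b', rfl, rfl, h'⟩
  exacts [Or.inl ⟨σ, rfl, Or.inr (hd ▸ hb)⟩, Or.inr ⟨σ, a', b', rfl, rfl, Or.inl ⟨rfl, h'⟩⟩]

end Exec

namespace Trace

def corec {X : Type*} (f : X → State × Option X) (x : X) : Trace :=
  ((f x).1, Seq.corec (Option.map f) (f x).2)

variable {X : Type*} {f : X → State × Option X} {x y : X} {σ : State}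

lemma corec_of_none (h : f x = (σ, none)) : corec f x = single σ := by
  rw [corec, h]
  exact congrArg _ (Seq.corec_nil _ _ rfl)

lemma corec_of_some (h : f x = (σ, some y)) : corec f x = cons σ (corec f y) := by
  rw [corec, h]
  exact congrArg _ (Seq.corec_cons rfl)

end Trace

instance (e : Expr) : DecidablePred (istrue e) := fun σ => inferInstanceAs (Decidable (e σ ≠ 0))

section Loop

variable (e : Expr) (g : State → Trace)

/-- One step of the corecursion producing a run of `while e do st` from a choice `g` of body
runs: `inl τ` still has to emit the trace `τ` and then test `e` in its last state, `inr σ` is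
the final repetition of the state `σ` in which the test failed. -/
def loopStep : Trace ⊕ State → State × Option (Trace ⊕ State)
  | .inl τ => (τ.hd, some (match τ.next with
      | some τ' => .inl τ'
      | none => if istrue e τ.hd then .inl (g τ.hd) else .inr τ.hd))
  | .inr σ => (σ, none)

def loopTrace (τ : Trace) : Trace := corec (loopStep e g) (.inl τ)

def loopRest (σ : State) : Trace := if istrue e σ then loopTrace e g (g σ) else single σ

variable {e g}

lemma loopTrace_cons (σ : State) (τ : Trace) :
    loopTrace e g (cons σ τ) = cons σ (loopTrace e g τ) :=
  corec_of_some (by simp [loopStep])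

lemma loopTrace_single (σ : State) :
    loopTrace e g (single σ) = cons σ (loopRest e g σ) := by
  by_cases he : istrue e σ
  · rw [loopRest, if_pos he]
    exact corec_of_some (by simp [loopStep, he])
  · rw [loopRest, if_neg he]
    exact (corec_of_some (y := .inr σ) (by simp [loopStep, he])).trans
      (congrArg _ (corec_of_none rfl))

variable {I : StatePred} {P : TracePred} {st : Stmt}
  (hg : ∀ σ, istrue e σ → I σ → Exec st σ (g σ) ∧ P (g σ) ∧ EndsIn I (g σ))
include hg

lemma loopRest_hd {σ : State} (hI : I σ) : (loopRest e g σ).hd = σ := by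
  unfold loopRest
  split_ifs with he
  exacts [(hg σ he hI).1.hd_eq, rfl]

lemma endsIn_loopTrace {τ : Trace} (h : EndsIn I τ) :
    EndsIn (fun σ => ¬ istrue e σ) (loopTrace e g τ) := by
  intro σ' hc
  generalize hρ : loopTrace e g τ = ρ at hc
  induction hc generalizing τ with
  | single σ =>
    cases τ using Trace.cases <;> simp [loopTrace_single, loopTrace_cons] at hρ
  | cons σ hc ih =>
    cases τ using Trace.cases with
    | single σ₁ =>
      rw [loopTrace_single, cons_inj] at hρ
      obtain ⟨rfl, rfl⟩ := hρ
      by_cases he : istrue e σ₁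
      · exact ih (hg σ₁ he (endsIn_single.1 h)).2.2 (by rw [loopRest, if_pos he])
      · rw [loopRest, if_neg he, converges_single_iff] at hc
        exact hc ▸ he
    | cons σ₁ τ₁ =>
      rw [loopTrace_cons, cons_inj] at hρ
      exact ih (endsIn_cons.1 h) hρ.2

lemma endsIn_loopRest {σ : State} (hI : I σ) :
    EndsIn (fun σ => ¬ istrue e σ) (loopRest e g σ) := by
  simpa [loopTrace_single] using endsIn_loopTrace hg (endsIn_single.2 hI)

lemma exec_loopTrace {σ : State} (hI : I σ) :
    Exec (.whileDo e st) σ (loopTrace e g (single σ)) := by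
  refine (exec_coind (fun s σ τ => s = .whileDo e st ∧ I σ ∧ τ = loopTrace e g (single σ))
    (fun s τ τ' => s = .whileDo e st ∧ EndsIn I τ ∧ τ' = loopTrace e g τ) ⟨?_, ?_⟩).1 _ _ _
    ⟨rfl, hI, rfl⟩
  · rintro _ σ _ ⟨rfl, hI, rfl⟩
    by_cases he : istrue e σ
    · obtain ⟨hexec, -, hends⟩ := hg σ he hI
      refine Or.inl ⟨he, cons σ (g σ), Or.inr (execSeq_cons_iff.2 ⟨_, rfl,
        execSeq_single_iff.2 hexec⟩), Or.inl ⟨rfl, endsIn_cons.2 hends, ?_⟩⟩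
      rw [loopTrace_single, loopTrace_cons, loopRest, if_pos he]
    · refine Or.inr ⟨he, ?_⟩
      rw [loopTrace_single, loopRest, if_neg he]
  · rintro _ τ _ ⟨rfl, hends, rfl⟩
    cases τ using Trace.cases with
    | single σ => exact Or.inl ⟨σ, rfl, Or.inl ⟨rfl, endsIn_single.1 hends, rfl⟩⟩
    | cons σ τ => exact Or.inr ⟨σ, τ, loopTrace e g τ, rfl, loopTrace_cons σ τ,
        Or.inl ⟨rfl, endsIn_cons.1 hends, rfl⟩⟩

lemma follows_loopTrace_of_follows_dup {τ τ₀ : Trace} (h : Follows (Dup I) τ τ₀) :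
    Follows (fun ρ => ∃ σ, I σ ∧ ρ = loopRest e g σ) τ₀ (loopTrace e g τ) := by
  refine follows_coind (fun a b => ∃ τ, Follows (Dup I) τ a ∧ b = loopTrace e g τ) ?_ ⟨τ, h, rfl⟩
  rintro a _ ⟨τ, hτ, rfl⟩
  cases τ using Trace.cases with
  | single σ =>
    obtain ⟨rfl, σ, hI, rfl⟩ := follows_single_iff.1 hτ
    exact Or.inr ⟨σ, single σ, _, rfl, loopTrace_single σ,
      Or.inr (follows_single_iff.2 ⟨loopRest_hd hg hI, σ, hI, rfl⟩)⟩
  | cons σ τ =>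
    obtain ⟨a', rfl, h'⟩ := follows_cons_iff.1 hτ
    exact Or.inr ⟨σ, a', _, rfl, loopTrace_cons σ τ, Or.inl ⟨τ, h', rfl⟩⟩

lemma iter_loopRest {σ : State} (hI : I σ) : Iter (Chop P (Dup I)) (loopRest e g σ) := by
  refine ⟨fun ρ => ∃ σ, I σ ∧ ρ = loopRest e g σ, ⟨σ, hI, rfl⟩, ?_⟩
  rintro _ ⟨σ, hI, rfl⟩
  by_cases he : istrue e σ
  · obtain ⟨-, hP, hends⟩ := hg σ he hI
    obtain ⟨τ₀, hf⟩ := exists_follows (Q := Dup I) (τ := g σ)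
      fun σ' hc => ⟨cons σ' (single σ'), rfl, σ', hends σ' hc, rfl⟩
    rw [loopRest, if_pos he]
    exact Or.inr ⟨τ₀, ⟨g σ, hP, hf⟩, follows_loopTrace_of_follows_dup hg hf⟩
  · rw [loopRest, if_neg he]
    exact Or.inl ⟨σ, trivial, rfl⟩

end Loop

def TotallyValid (U : StatePred) (s : Stmt) (P : TracePred) : Prop :=
  ∀ σ, U σ → ∃ τ, Exec s σ τ ∧ P τ

namespace TotallyValid

variable {U U' V I : StatePred} {P P' Q : TracePred} {e : Expr} {s s₀ s₁ st sf : Stmt}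

lemma assign (U : StatePred) (x : Var) (e : Expr) :
    TotallyValid U (.assign x e) (UpdPred U x e) :=
  fun σ hU => ⟨_, exec_assign, σ, hU, rfl⟩

lemma skip (U : StatePred) : TotallyValid U .skip (Sglt U) :=
  fun σ hU => ⟨_, exec_skip, σ, hU, rfl⟩

lemma seq (h₀ : TotallyValid U s₀ (Chop P (Sglt V))) (h₁ : TotallyValid V s₁ Q) :
    TotallyValid U (.seq s₀ s₁) (Chop P Q) := by
  intro σ hU
  obtain ⟨τ, hexec, hchop⟩ := h₀ σ hU
  obtain ⟨hP, hV⟩ := chop_sglt_iff.1 hchop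
  obtain ⟨τ', hf⟩ := exists_follows (Q := fun τ' => Exec s₁ τ'.hd τ' ∧ Q τ') fun σ' hc => by
    obtain ⟨τ₁, hexec₁, hQ⟩ := h₁ σ' (hV σ' hc)
    exact ⟨τ₁, hexec₁.hd_eq, hexec₁.hd_eq.symm ▸ hexec₁, hQ⟩
  exact ⟨τ', exec_seq hexec (execSeq_of_follows (hf.mono fun _ => And.left)),
    τ, hP, hf.mono fun _ => And.right⟩

lemma ifte (ht : TotallyValid (fun σ => istrue e σ ∧ U σ) st P)
    (hf : TotallyValid (fun σ => ¬ istrue e σ ∧ U σ) sf P) :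
    TotallyValid U (.ifte e st sf) (Chop (Dup U) P) := by
  intro σ hU
  by_cases he : istrue e σ
  · obtain ⟨τ, hexec, hP⟩ := ht σ ⟨he, hU⟩
    exact ⟨_, exec_ifte_of_true he hexec, chop_dup_cons hU hexec.hd_eq hP⟩
  · obtain ⟨τ, hexec, hP⟩ := hf σ ⟨he, hU⟩
    exact ⟨_, exec_ifte_of_false he hexec, chop_dup_cons hU hexec.hd_eq hP⟩

lemma whileDo (hUI : ∀ σ, U σ → I σ)
    (hbody : TotallyValid (fun σ => istrue e σ ∧ I σ) st (Chop P (Sglt I))) :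
    TotallyValid U (.whileDo e st)
      (Chop (Dup U) (Chop (Iter (Chop P (Dup I))) (Sglt (fun σ => ¬ istrue e σ)))) := by
  intro σ hU
  have hI := hUI σ hU
  have : Nonempty Trace := ⟨single σ⟩
  choose! g hg using fun σ (he : istrue e σ) (hI : I σ) => hbody σ ⟨he, hI⟩
  replace hg : ∀ σ, istrue e σ → I σ → Exec st σ (g σ) ∧ P (g σ) ∧ EndsIn I (g σ) :=
    fun σ he hI => ⟨(hg σ he hI).1, chop_sglt_iff.1 (hg σ he hI).2⟩
  refine ⟨_, exec_loopTrace hg hI, ?_⟩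
  rw [loopTrace_single]
  exact chop_dup_cons hU (loopRest_hd hg hI)
    (chop_sglt_iff.2 ⟨iter_loopRest hg hI, endsIn_loopRest hg hI⟩)

lemma conseq (hU : ∀ σ, U σ → U' σ) (h : TotallyValid U' s P') (hP : ∀ τ, P' τ → P τ) :
    TotallyValid U s P := fun σ hσ =>
  (h σ (hU σ hσ)).imp fun τ => And.imp_right (hP τ)

lemma exist {Z : Type} {U : Z → StatePred} {P : Z → TracePred}
    (h : ∀ z, TotallyValid (U z) s (P z)) :
    TotallyValid (fun σ => ∃ z, U z σ) s (fun τ => ∃ z, P z τ) := fun σ ⟨z, hσ⟩ =>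
  (h z σ hσ).imp fun _ => And.imp_right fun hP => ⟨z, hP⟩

end TotallyValid

theorem tHoare_sound_total_general (s : Stmt) (U : StatePred) (P : TracePred)
    (h : THoare U s P) :
    ∀ σ : State, U σ → ∃ τ : Trace, Exec s σ τ ∧ P τ := by
  show TotallyValid U s P
  induction h with
  | assign U x e => exact .assign U x e
  | skip U => exact .skip U
  | seq _ _ ih₀ ih₁ => exact ih₀.seq ih₁
  | ifte _ _ iht ihf => exact iht.ifte ihf
  | whileDo hUI _ ih => exact .whileDo hUI ih
  | conseq hU _ hP ih => exact .conseq hU ih hP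
  | exist _ ih => exact .exist ih

/-- Total-correctness soundness of the trace-based Hoare logic. -/
theorem tHoare_sound_total (s : Stmt) (U : StatePred) (P : TracePred)
    (hP : IsSetoidPred P) (h : THoare U s P) :
    ∀ σ : State, U σ → ∃ τ : Trace, Exec s σ τ ∧ P τ :=
  tHoare_sound_total_general s U P h

end WhileTrace
end

section
/- Embedding of the partial-correctness Hoare logic: for any While statement s and state predicates U and Z, if ⊢p {U} s {Z} is derivable in the state-based partial-correctness Hoare logic, then ⊢{U} s {True ** [Z]} is derivable in the trace-based Hoare logic. -/
namespace WhileTrace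

/-!
A trace satisfies `True ** [Z]` exactly when `[Z]` follows it in itself, i.e. when it is
infinite or ends in a `Z`-state. This property survives prefixing, `P ** (True ** [Z]) ⊨ True ** [Z]`,
which settles sequencing and conditionals. For a loop with invariant `I`, a coinduction along the
iteration `((True ** [I]) ** ⟨I⟩)*` shows that every iterate of the body that is entered in `I`
hands over in `I`, so a finite run ends in a state satisfying `I` and the exit test `¬e`.
-/

theorem Trace.single_ne_cons_s16 (σ σ' : State) (τ : Trace) : Trace.single σ ≠ Trace.cons σ' τ :=
  fun h => Stream'.Seq.nil_ne_cons (congrArg Prod.snd h)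

theorem Trace.cons_inj_s16 {σ σ' : State} {τ τ' : Trace} :
    Trace.cons σ τ = Trace.cons σ' τ' ↔ σ = σ' ∧ τ = τ' := by
  refine ⟨fun h => ?_, fun ⟨hσ, hτ⟩ => hσ ▸ hτ ▸ rfl⟩
  obtain ⟨h₁, h₂⟩ := Stream'.Seq.cons_injective2 (congrArg Prod.snd h)
  exact ⟨congrArg Prod.fst h, Prod.ext h₁ h₂⟩

section Follows

variable {Q Q' : TracePred} {σ : State} {τ τ' : Trace}

theorem follows_unfold (h : Follows Q τ τ') :
    (∃ σ, τ = Trace.single σ ∧ τ'.hd = σ ∧ Q τ') ∨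
      ∃ σ τ₀ τ₀', τ = Trace.cons σ τ₀ ∧ τ' = Trace.cons σ τ₀' ∧ Follows Q τ₀ τ₀' := by
  obtain ⟨R, hR, hcons⟩ := h
  exact (hcons τ τ' hR).imp_right fun ⟨σ, τ₀, τ₀', h₁, h₂, h₃⟩ => ⟨σ, τ₀, τ₀', h₁, h₂, R, h₃, hcons⟩

theorem Follows.coinduct (R : Trace → Trace → Prop)
    (hR : ∀ a b, R a b → Follows Q a b ∨
      ∃ σ a' b', a = Trace.cons σ a' ∧ b = Trace.cons σ b' ∧ R a' b')
    (h : R τ τ') : Follows Q τ τ' := by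
  refine ⟨fun a b => R a b ∨ Follows Q a b, Or.inl h, fun a b hab => ?_⟩
  have of_follows (hf : Follows Q a b) :
      (∃ σ, a = Trace.single σ ∧ b.hd = σ ∧ Q b) ∨
        ∃ σ a' b', a = Trace.cons σ a' ∧ b = Trace.cons σ b' ∧ (R a' b' ∨ Follows Q a' b') :=
    (follows_unfold hf).imp_right fun ⟨σ, a', b', h₁, h₂, h₃⟩ => ⟨σ, a', b', h₁, h₂, Or.inr h₃⟩
  rcases hab with hab | hab
  · rcases hR a b hab with hf | ⟨σ, a', b', h₁, h₂, h₃⟩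
    · exact of_follows hf
    · exact Or.inr ⟨σ, a', b', h₁, h₂, Or.inl h₃⟩
  · exact of_follows hab

theorem follows_single (hQ : Q τ') (hhd : τ'.hd = σ) : Follows Q (Trace.single σ) τ' :=
  ⟨fun a b => a = Trace.single σ ∧ b = τ', ⟨rfl, rfl⟩, by
    rintro _ _ ⟨rfl, rfl⟩
    exact Or.inl ⟨σ, rfl, hhd, hQ⟩⟩

theorem follows_cons (σ : State) (h : Follows Q τ τ') :
    Follows Q (Trace.cons σ τ) (Trace.cons σ τ') :=
  Follows.coinduct (fun a b => (a = Trace.cons σ τ ∧ b = Trace.cons σ τ') ∨ Follows Q a b)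
    (by
      rintro a b (⟨rfl, rfl⟩ | hab)
      · exact Or.inr ⟨σ, τ, τ', rfl, rfl, Or.inr h⟩
      · exact Or.inl hab)
    (Or.inl ⟨rfl, rfl⟩)

theorem follows_single_inv (h : Follows Q (Trace.single σ) τ') : τ'.hd = σ ∧ Q τ' := by
  rcases follows_unfold h with ⟨σ₀, hσ, hhd, hQ⟩ | ⟨_, _, _, hcons, _⟩
  · exact ⟨hhd.trans (congrArg Prod.fst hσ).symm, hQ⟩
  · exact absurd hcons (Trace.single_ne_cons_s16 _ _ _)

theorem follows_cons_inv (h : Follows Q (Trace.cons σ τ) τ') :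
    ∃ τ₀', τ' = Trace.cons σ τ₀' ∧ Follows Q τ τ₀' := by
  rcases follows_unfold h with ⟨_, hsingle, _⟩ | ⟨σ₀, τ₀, τ₀', hcons, rfl, hf⟩
  · exact absurd hsingle.symm (Trace.single_ne_cons_s16 _ _ _)
  · obtain ⟨rfl, rfl⟩ := Trace.cons_inj_s16.mp hcons
    exact ⟨τ₀', rfl, hf⟩

theorem follows_hd (h : Follows Q τ τ') : τ.hd = τ'.hd := by
  rcases follows_unfold h with ⟨σ, rfl, hhd, _⟩ | ⟨σ, _, _, rfl, rfl, _⟩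
  · exact hhd.symm
  · rfl

theorem follows_mono (h : Follows Q τ τ') (hQ : ∀ τ, Q τ → Q' τ) : Follows Q' τ τ' := by
  obtain ⟨R, hR, hcons⟩ := h
  exact ⟨R, hR, fun a b hab =>
    (hcons a b hab).imp_left fun ⟨σ, h₁, h₂, h₃⟩ => ⟨σ, h₁, h₂, hQ _ h₃⟩⟩

end Follows

theorem sglt_mono {U V : StatePred} (hUV : ∀ σ, U σ → V σ) {τ : Trace} (h : Sglt U τ) :
    Sglt V τ :=
  let ⟨σ, hU, hτ⟩ := h
  ⟨σ, hUV σ hU, hτ⟩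

theorem chop_mono_right {P Q Q' : TracePred} (hQ : ∀ τ, Q τ → Q' τ) {τ : Trace}
    (h : Chop P Q τ) : Chop P Q' τ :=
  let ⟨τ₀, hP, hf⟩ := h
  ⟨τ₀, hP, follows_mono hf hQ⟩

theorem iter_unfold {P : TracePred} {τ : Trace} (h : Iter P τ) :
    Sglt (fun _ => True) τ ∨ ∃ τ₀, P τ₀ ∧ Follows (Iter P) τ₀ τ := by
  obtain ⟨X, hX, hstep⟩ := h
  exact (hstep τ hX).imp_right fun ⟨τ₀, hP, hf⟩ =>
    ⟨τ₀, hP, follows_mono hf fun τ hτ => ⟨X, hτ, hstep⟩⟩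

section EndsIn

variable {Z : StatePred} {τ τ' : Trace}

theorem follows_sglt_self_of_sglt (h : Sglt Z τ) : Follows (Sglt Z) τ τ := by
  obtain ⟨σ, hZ, rfl⟩ := h
  exact follows_single ⟨σ, hZ, rfl⟩ rfl

theorem follows_sglt_self_of_follows {Q : TracePred}
    (hQ : ∀ τ, Q τ → Follows (Sglt Z) τ τ) (h : Follows Q τ τ') : Follows (Sglt Z) τ' τ' := by
  refine Follows.coinduct (fun a b => a = b ∧ ∃ x, Follows Q x a) ?_ ⟨rfl, τ, h⟩
  rintro a _ ⟨rfl, x, hx⟩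
  rcases follows_unfold hx with ⟨_, _, _, hQa⟩ | ⟨σ, x', a', _, rfl, hx'⟩
  · exact Or.inl (hQ a hQa)
  · exact Or.inr ⟨σ, a', a', rfl, rfl, rfl, x', hx'⟩

theorem chop_true_sglt_iff : Chop (fun _ => True) (Sglt Z) τ ↔ Follows (Sglt Z) τ τ :=
  ⟨fun ⟨_, _, h⟩ => follows_sglt_self_of_follows (fun _ => follows_sglt_self_of_sglt) h,
    fun h => ⟨τ, trivial, h⟩⟩

theorem chop_chop_true_sglt {P : TracePred} (h : Chop P (Chop (fun _ => True) (Sglt Z)) τ) :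
    Chop (fun _ => True) (Sglt Z) τ :=
  let ⟨_, _, hf⟩ := h
  chop_true_sglt_iff.mpr (follows_sglt_self_of_follows (fun _ => chop_true_sglt_iff.mp) hf)

end EndsIn

section Loop

variable {P : TracePred} {I V : StatePred}

/-- `a` is either inside an iterate of the loop body, whose closing doubled state will satisfy
`I`, or at the start of an iterate, in an `I`-state. -/
def LoopInv (P : TracePred) (I V : StatePred) (a b : Trace) : Prop :=
  ((∃ y m, Follows (Dup I) y m ∧ Follows (Iter (Chop P (Dup I))) m a) ∨
    (Iter (Chop P (Dup I)) a ∧ I a.hd)) ∧ Follows (Sglt V) a b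

theorem follows_sglt_and_of_iter {τ τ' : Trace} (hiter : Iter (Chop P (Dup I)) τ) (hI : I τ.hd)
    (hV : Follows (Sglt V) τ τ') : Follows (Sglt fun σ => I σ ∧ V σ) τ τ' := by
  refine Follows.coinduct (LoopInv P I V) ?_ ⟨Or.inr ⟨hiter, hI⟩, hV⟩
  have inside : ∀ {y m a b}, Follows (Dup I) y m → Follows (Iter (Chop P (Dup I))) m a →
      Follows (Sglt V) a b → ∃ σ a' b', a = Trace.cons σ a' ∧ b = Trace.cons σ b' ∧
        LoopInv P I V a' b' := by
    intro y m a b hy hm hab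
    rcases follows_unfold hy with ⟨_, _, _, σ, hIσ, rfl⟩ | ⟨σ, y', m', _, rfl, hy'⟩
    · obtain ⟨a', rfl, hm'⟩ := follows_cons_inv hm
      obtain ⟨b', rfl, hab'⟩ := follows_cons_inv hab
      obtain ⟨hhd, hiter'⟩ := follows_single_inv hm'
      exact ⟨σ, a', b', rfl, rfl, Or.inr ⟨hiter', hhd ▸ hIσ⟩, hab'⟩
    · obtain ⟨a', rfl, hm'⟩ := follows_cons_inv hm
      obtain ⟨b', rfl, hab'⟩ := follows_cons_inv hab
      exact ⟨σ, a', b', rfl, rfl, Or.inl ⟨y', m', hy', hm'⟩, hab'⟩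
  rintro a b ⟨⟨y, m, hy, hm⟩ | ⟨hiter, hIa⟩, hab⟩
  · exact Or.inr (inside hy hm hab)
  rcases iter_unfold hiter with ⟨σ, -, rfl⟩ | ⟨m, ⟨y, -, hy⟩, hm⟩
  · obtain ⟨hhd, σ', hVσ', rfl⟩ := follows_single_inv hab
    subst hhd
    exact Or.inl (follows_single ⟨σ', ⟨hIa, hVσ'⟩, rfl⟩ rfl)
  · exact Or.inr (inside hy hm hab)

theorem chop_true_sglt_of_while {τ : Trace}
    (h : Chop (Dup I) (Chop (Iter (Chop P (Dup I))) (Sglt V)) τ) :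
    Chop (fun _ => True) (Sglt fun σ => I σ ∧ V σ) τ := by
  obtain ⟨_, ⟨σ, hI, rfl⟩, hf⟩ := h
  obtain ⟨τ', rfl, hf'⟩ := follows_cons_inv hf
  obtain ⟨hhd, t, hiter, hV⟩ := follows_single_inv hf'
  exact ⟨Trace.cons σ t, trivial,
    follows_cons σ (follows_sglt_and_of_iter hiter ((follows_hd hV).trans hhd ▸ hI) hV)⟩

end Loop

theorem THoare.post_mono {U : StatePred} {s : Stmt} {P P' : TracePred} (h : THoare U s P)
    (hP : ∀ τ, P τ → P' τ) : THoare U s P' :=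
  .conseq (fun _ => id) h hP

/-- Embedding of the partial-correctness Hoare logic. -/
theorem pHoare_embed (s : Stmt) (U Z : StatePred) (h : PHoare U s Z) :
    THoare U s (Chop (fun _ => True) (Sglt Z)) := by
  induction h with
  | assign Z x e =>
    refine (THoare.assign _ x e).post_mono fun _ ⟨σ, hZ, hτ⟩ => hτ ▸ ?_
    exact chop_true_sglt_iff.mpr (follows_cons σ (follows_sglt_self_of_sglt ⟨_, hZ, rfl⟩))
  | skip U =>
    exact (THoare.skip U).post_mono fun _ h =>
      chop_true_sglt_iff.mpr (follows_sglt_self_of_sglt h)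
  | seq _ _ ih₀ ih₁ => exact (THoare.seq ih₀ ih₁).post_mono fun _ => chop_chop_true_sglt
  | ifte _ _ iht ihf => exact (THoare.ifte iht ihf).post_mono fun _ => chop_chop_true_sglt
  | whileDo _ ih =>
    exact (THoare.whileDo (fun _ => id) ih).post_mono fun _ => chop_true_sglt_of_while
  | exist _ ih =>
    exact (THoare.exist ih).post_mono fun _ ⟨z, h⟩ =>
      chop_mono_right (fun _ => sglt_mono fun _ hV => ⟨z, hV⟩) h
  | conseq hU _ hZ ih =>
    exact .conseq hU ih fun _ => chop_mono_right fun _ => sglt_mono hZ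

end WhileTrace
end
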